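/- Let M be a compact Riemannian manifold with C² boundary and outward unit normal n̂, and let u be a Neumann p-Laplacian eigenfunction, smooth near a boundary point x̄ where ∇u(x̄) ≠ 0. Suppose x̄ is a maximum point of F := |∇u|^p - ψ∘u for a C¹ function ψ : ℝ → ℝ. If the second fundamental form of ∂M is nonnegative (convex boundary), then ∇F(x̄) = 0. -/

import Mathlib

noncomputable section

/-- The Hessian `H_f(x)(v,w)` of `f` at `x`, as the derivative of the gradient. -/
def hess {n : ℕ} (f : EuclideanSpace ℝ (Fin n) → ℝ) (x v w : EuclideanSpace ℝ (Fin n)) : ℝ :=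
  inner ℝ (fderiv ℝ (gradient f) x v) w

/-- The divergence of a vector field on Euclidean space. -/
def divg {n : ℕ} (X : EuclideanSpace ℝ (Fin n) → EuclideanSpace ℝ (Fin n))
    (x : EuclideanSpace ℝ (Fin n)) : ℝ :=
  ∑ i : Fin n, inner ℝ (fderiv ℝ X x (EuclideanSpace.single i (1:ℝ)))
      (EuclideanSpace.single i (1:ℝ))

/-- The Laplacian `Δf = div ∇f`. -/
def lapl {n : ℕ} (f : EuclideanSpace ℝ (Fin n) → ℝ) (x : EuclideanSpace ℝ (Fin n)) : ℝ :=
  divg (gradient f) x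

/-- The `p`-Laplacian `Δ_p f = div(|∇f|^{p-2}∇f)`. -/
def plap {n : ℕ} (p : ℝ) (f : EuclideanSpace ℝ (Fin n) → ℝ)
    (x : EuclideanSpace ℝ (Fin n)) : ℝ :=
  divg (fun y => ‖gradient f y‖ ^ (p-2) • gradient f y) x

/-- `A_u = H_u(∇u,∇u)/|∇u|²`. -/
def Au {n : ℕ} (f : EuclideanSpace ℝ (Fin n) → ℝ) (x : EuclideanSpace ℝ (Fin n)) : ℝ :=
  hess f x (gradient f x) (gradient f x) / ‖gradient f x‖ ^ 2

/-- The squared Hilbert–Schmidt norm `|H_u|²` of the Hessian. -/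
def hessNormSq {n : ℕ} (f : EuclideanSpace ℝ (Fin n) → ℝ)
    (x : EuclideanSpace ℝ (Fin n)) : ℝ :=
  ∑ i : Fin n, ∑ j : Fin n,
    (hess f x (EuclideanSpace.single i (1:ℝ)) (EuclideanSpace.single j (1:ℝ))) ^ 2

/-- The second order part `P_u^{II}` of the linearized `p`-Laplacian:
`P_u^{II}(η) = |∇u|^{p-2}Δη + (p-2)|∇u|^{p-4}H_η(∇u,∇u)`. -/
def PII {n : ℕ} (p : ℝ) (u η : EuclideanSpace ℝ (Fin n) → ℝ)
    (x : EuclideanSpace ℝ (Fin n)) : ℝ :=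
  ‖gradient u x‖ ^ (p-2) * lapl η x
    + (p-2) * ‖gradient u x‖ ^ (p-4) * hess η x (gradient u x) (gradient u x)

/-- The Ricci curvature of flat Euclidean space (identically zero). -/
def ricci {n : ℕ} (x v w : EuclideanSpace ℝ (Fin n)) : ℝ := 0

/-- Signed power: `spow x q = |x|^q · sign x`, so `x^{(p-1)} = spow x (p-1)`. -/
def spow (x q : ℝ) : ℝ := Real.sign x * |x| ^ q

/-!
At a boundary maximum `x̄` of `F` on `{g ≤ 0}` with `∇g(x̄) ≠ 0`, Lagrange multipliers for the
level set `{g = 0}` together with first-order optimality in the inward direction `-∇g(x̄)` give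
`∇F(x̄) = c ∇g(x̄)` with `c ≥ 0` (the Karush–Kuhn–Tucker condition). On the other hand, the
Neumann condition says that `⟨∇u, ∇g⟩` vanishes on `{g = 0}`; differentiating it along the
tangent vector `∇u(x̄)` gives `H_u(∇u, ∇g) = -H_g(∇u, ∇u) ≤ 0` by convexity, hence
`⟨∇F, ∇g⟩ = p |∇u|^{p-2} H_u(∇u, ∇g) ≤ 0` at `x̄`. So `c |∇g(x̄)|² ≤ 0`, forcing `c = 0`.
-/

open Filter InnerProductSpace

section Multipliers

variable {E : Type*} [NormedAddCommGroup E] [NormedSpace ℝ E]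
  {f φ : E → ℝ} {f' φ' : StrongDual ℝ E} {x₀ w : E}

theorem IsLocalExtrOn.exists_eq_smul_of_hasStrictFDerivAt [CompleteSpace E]
    (hextr : IsLocalExtrOn φ {x | f x = f x₀} x₀) (hf : HasStrictFDerivAt f f' x₀)
    (hφ : HasStrictFDerivAt φ φ' x₀) (hf' : f' ≠ 0) : ∃ c : ℝ, φ' = c • f' := by
  obtain ⟨a, b, hab, hcomb⟩ := hextr.exists_multipliers_of_hasStrictFDerivAt_1d hf hφ
  have hb : b ≠ 0 := by
    rintro rfl
    have ha : a ≠ 0 := fun ha => hab (by simp [ha])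
    exact hf' (by simpa [ha] using hcomb)
  refine ⟨-a / b, ContinuousLinearMap.ext fun w => ?_⟩
  have hw : a * f' w + b * φ' w = 0 := by simpa using congrArg (· w) hcomb
  simp only [smul_apply, smul_eq_mul]
  field_simp
  linarith

theorem mem_posTangentConeAt_of_hasFDerivAt_neg (hf : HasFDerivAt f f' x₀) (hw : f' w < 0) :
    w ∈ posTangentConeAt {x | f x ≤ f x₀} x₀ := by
  refine mem_posTangentConeAt_of_frequently_mem (Eventually.frequently ?_)
  have hline : HasDerivAt (fun t : ℝ => f (x₀ + t • w)) (f' w) 0 := by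
    have hγ : HasDerivAt (fun t : ℝ => x₀ + t • w) w 0 := by
      simpa using ((hasDerivAt_id (0 : ℝ)).smul_const w).const_add x₀
    exact (by simpa using hf : HasFDerivAt f f' (x₀ + (0 : ℝ) • w)).comp_hasDerivAt 0 hγ
  have hslope := (hasDerivAt_iff_tendsto_slope.mp hline).mono_left
    (nhdsWithin_mono 0 fun t (ht : 0 < t) => ht.ne')
  filter_upwards [hslope.eventually_lt_const hw, self_mem_nhdsWithin] with t hneg (ht : 0 < t)
  rw [slope_def_field, sub_zero, div_lt_iff₀ ht, zero_mul, sub_neg, zero_smul, add_zero] at hneg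
  exact hneg.le

theorem IsLocalMaxOn.exists_nonneg_smul_of_hasStrictFDerivAt [CompleteSpace E]
    (hmax : IsLocalMaxOn φ {x | f x ≤ f x₀} x₀) (hf : HasStrictFDerivAt f f' x₀)
    (hφ : HasStrictFDerivAt φ φ' x₀) (hf' : f' ≠ 0) : ∃ c : ℝ, 0 ≤ c ∧ φ' = c • f' := by
  have hlevel : IsLocalExtrOn φ {x | f x = f x₀} x₀ :=
    Or.inr (IsLocalMaxOn.on_subset hmax fun x (hx : f x = f x₀) => hx.le)
  obtain ⟨c, rfl⟩ := hlevel.exists_eq_smul_of_hasStrictFDerivAt hf hφ hf'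
  refine ⟨c, ?_, rfl⟩
  obtain ⟨w, hw⟩ : ∃ w, f' w < 0 := by
    obtain ⟨v, hv⟩ := DFunLike.ne_iff.mp hf'
    rcases (show f' v ≠ 0 from hv).lt_or_gt with h | h
    · exact ⟨v, h⟩
    · exact ⟨-v, by simpa using h⟩
  have hcw : c * f' w ≤ 0 := hmax.hasFDerivWithinAt_nonpos hφ.hasFDerivAt.hasFDerivWithinAt
    (mem_posTangentConeAt_of_hasFDerivAt_neg hf.hasFDerivAt hw)
  exact nonneg_of_mul_nonpos_left hcw hw

end Multipliers

section Gradient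

variable {E : Type*} [NormedAddCommGroup E] [InnerProductSpace ℝ E] [CompleteSpace E]
  {f u g : E → ℝ} {x : E}

theorem fderiv_apply_gradient (f : E → ℝ) (x : E) :
    fderiv ℝ f x (gradient f x) = ‖gradient f x‖ ^ 2 := by
  rw [← inner_gradient_left, real_inner_self_eq_norm_sq]

theorem fderiv_ne_zero_of_gradient_ne_zero (hf : gradient f x ≠ 0) : fderiv ℝ f x ≠ 0 := by
  intro h
  have := fderiv_apply_gradient f x
  rw [h, zero_apply] at this
  exact hf (by simpa using this.symm)

theorem ContDiffAt.gradient {n : WithTop ℕ∞} (hf : ContDiffAt ℝ (n + 1) f x) :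
    ContDiffAt ℝ n (gradient f) x :=
  (toDual ℝ E).symm.toLinearIsometry.toContinuousLinearMap.contDiff.contDiffAt.comp x
    (hf.fderiv_right le_rfl)

theorem inner_fderiv_gradient (hf : ContDiffAt ℝ 2 f x) (v w : E) :
    inner ℝ (fderiv ℝ (gradient f) x v) w = fderiv ℝ (fderiv ℝ f) x v w := by
  have hd : DifferentiableAt ℝ (fderiv ℝ f) x :=
    (hf.fderiv_right (m := 1) le_rfl).differentiableAt one_ne_zero
  have : gradient f = (toDual ℝ E).symm.toLinearIsometry.toContinuousLinearMap ∘ fderiv ℝ f :=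
    rfl
  rw [this, fderiv_comp x (ContinuousLinearMap.differentiableAt _) hd,
    ContinuousLinearMap.fderiv]
  exact toDual_symm_apply

theorem inner_fderiv_gradient_comm (hf : ContDiffAt ℝ 2 f x) (v w : E) :
    inner ℝ (fderiv ℝ (gradient f) x v) w = inner ℝ (fderiv ℝ (gradient f) x w) v := by
  rw [inner_fderiv_gradient hf, inner_fderiv_gradient hf]
  exact hf.isSymmSndFDerivAt (by simp [minSmoothness_of_isRCLikeNormedField]) v w

theorem hasStrictFDerivAt_norm_gradient_rpow_sub {p : ℝ} (hp : 1 < p) {ψ : ℝ → ℝ}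
    (hψ : ContDiff ℝ 1 ψ) (hu : ContDiffAt ℝ 2 u x) :
    HasStrictFDerivAt (fun y => ‖gradient u y‖ ^ p - ψ (u y))
      (((p * ‖gradient u x‖ ^ (p - 2)) • innerSL ℝ (gradient u x)).comp
          (fderiv ℝ (gradient u) x) - deriv ψ (u x) • fderiv ℝ u x) x := by
  have hnorm := (contDiff_norm_rpow (E := E) hp).contDiffAt.hasStrictFDerivAt
    (x := gradient u x) one_ne_zero
  rw [fderiv_norm_rpow _ hp] at hnorm
  exact (hnorm.comp x ((hu.gradient (n := 1)).hasStrictFDerivAt one_ne_zero)).sub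
    ((hψ.contDiffAt.hasStrictDerivAt one_ne_zero).comp_hasStrictFDerivAt x
      (hu.hasStrictFDerivAt two_ne_zero))

theorem inner_fderiv_gradient_normal_nonpos_of_neumann (hu : ContDiffAt ℝ 2 u x)
    (hg : ContDiffAt ℝ 2 g x) (hgx : gradient g x ≠ 0)
    (hneum : ∀ y, g y = g x → inner ℝ (gradient u y) (gradient g y) = 0)
    (hconv : 0 ≤ inner ℝ (fderiv ℝ (gradient g) x (gradient u x)) (gradient u x)) :
    inner ℝ (fderiv ℝ (gradient u) x (gradient g x)) (gradient u x) ≤ 0 := by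
  have hh := ((hu.gradient (n := 1)).hasStrictFDerivAt one_ne_zero).inner ℝ
    ((hg.gradient (n := 1)).hasStrictFDerivAt one_ne_zero)
  have hconst : IsLocalExtrOn (fun y => inner ℝ (gradient u y) (gradient g y))
      {y | g y = g x} x :=
    Or.inr <| eventually_of_mem self_mem_nhdsWithin fun y hy => by
      simp only [hneum y hy, hneum x rfl, le_refl]
  obtain ⟨c, hc⟩ := hconst.exists_eq_smul_of_hasStrictFDerivAt (hg.hasStrictFDerivAt two_ne_zero)
    hh (fderiv_ne_zero_of_gradient_ne_zero hgx)
  have htangent := congrArg (· (gradient u x)) hc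
  simp only [ContinuousLinearMap.comp_apply, ContinuousLinearMap.prod_apply,
    fderivInnerCLM_apply, smul_apply, smul_eq_mul, ← inner_gradient_left] at htangent
  rw [real_inner_comm (gradient u x) (gradient g x), hneum x rfl, mul_zero] at htangent
  rw [inner_fderiv_gradient_comm hu]
  linarith [real_inner_comm (gradient u x) (fderiv ℝ (gradient g) x (gradient u x))]

end Gradient

theorem stmt16_general {n : ℕ} (p : ℝ) (hp : 1 < p)
    (g : EuclideanSpace ℝ (Fin n) → ℝ) (hg : ContDiff ℝ 2 g)
    (Ω : Set (EuclideanSpace ℝ (Fin n))) (hΩ : Ω = {x | g x ≤ 0})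
    (hreg : ∀ x, g x = 0 → gradient g x ≠ 0)
    (hconv : ∀ x, g x = 0 → ∀ X : EuclideanSpace ℝ (Fin n),
        (inner ℝ X (gradient g x) : ℝ) = 0 → 0 ≤ hess g x X X)
    (u : EuclideanSpace ℝ (Fin n) → ℝ)
    (xb : EuclideanSpace ℝ (Fin n)) (hxb : g xb = 0)
    (U : Set (EuclideanSpace ℝ (Fin n))) (hU : IsOpen U) (hxbU : xb ∈ U)
    (hu : ContDiffOn ℝ 2 u U)
    (hneum : ∀ x, g x = 0 → (inner ℝ (gradient u x) (gradient g x) : ℝ) = 0)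
    (ψ : ℝ → ℝ) (hψ : ContDiff ℝ 1 ψ)
    (hmax : ∀ x ∈ Ω, ‖gradient u x‖ ^ p - ψ (u x) ≤ ‖gradient u xb‖ ^ p - ψ (u xb)) :
    gradient (fun x => ‖gradient u x‖ ^ p - ψ (u x)) xb = 0 := by
  have hu2 : ContDiffAt ℝ 2 u xb := hu.contDiffAt (hU.mem_nhds hxbU)
  have hg2 : ContDiffAt ℝ 2 g xb := hg.contDiffAt
  have hF := hasStrictFDerivAt_norm_gradient_rpow_sub hp hψ hu2
  have hmaxOn : IsLocalMaxOn (fun x => ‖gradient u x‖ ^ p - ψ (u x)) {x | g x ≤ g xb} xb :=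
    IsMaxOn.localize fun x hx => hmax x (hΩ ▸ hxb ▸ hx)
  obtain ⟨c, hc, hKKT⟩ := hmaxOn.exists_nonneg_smul_of_hasStrictFDerivAt
    (hg2.hasStrictFDerivAt two_ne_zero) hF (fderiv_ne_zero_of_gradient_ne_zero (hreg xb hxb))
  have hnormal := inner_fderiv_gradient_normal_nonpos_of_neumann hu2 hg2 (hreg xb hxb)
    (fun y hy => hneum y (hy.trans hxb)) (hconv xb hxb _ (hneum xb hxb))
  have hnormalF := congrArg (· (gradient g xb)) hKKT
  simp only [sub_apply, ContinuousLinearMap.comp_apply, smul_apply, smul_eq_mul,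
    innerSL_apply_apply, ← inner_gradient_left, hneum xb hxb, real_inner_self_eq_norm_sq,
    mul_zero, sub_zero] at hnormalF
  have hcG : c * ‖gradient g xb‖ ^ 2 ≤ 0 := by
    rw [← hnormalF, real_inner_comm]
    exact mul_nonpos_of_nonneg_of_nonpos (by positivity) hnormal
  have hc0 : c = 0 :=
    le_antisymm (nonpos_of_mul_nonpos_left hcG (pow_pos (norm_pos_iff.mpr (hreg xb hxb)) 2)) hc
  rw [gradient, hF.hasFDerivAt.fderiv, hKKT, hc0, zero_smul, map_zero]

/-- let `Ω = {g ≤ 0}` be a compact domain with `C²` boundary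
`{g = 0}` (outward normal `∇g/|∇g|`), convex in the sense that the second
fundamental form is nonnegative (`H_g ≥ 0` on tangent vectors).  Let `u` be a
Neumann `p`-Laplacian eigenfunction, smooth near a boundary point `x̄` with
`∇u(x̄) ≠ 0`, and suppose `x̄` maximizes `F = |∇u|^p - ψ∘u` on `Ω` for a `C¹`
function `ψ`.  Then `∇F(x̄) = 0`. -/
theorem stmt16 {n : ℕ} (hn : 2 ≤ n) (p lam : ℝ) (hp : 1 < p) (hlam : 0 < lam)
    (g : EuclideanSpace ℝ (Fin n) → ℝ) (hg : ContDiff ℝ 2 g)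
    (Ω : Set (EuclideanSpace ℝ (Fin n))) (hΩ : Ω = {x | g x ≤ 0})
    (hcomp : IsCompact Ω)
    (hreg : ∀ x, g x = 0 → gradient g x ≠ 0)
    (hconv : ∀ x, g x = 0 → ∀ X : EuclideanSpace ℝ (Fin n),
        (inner ℝ X (gradient g x) : ℝ) = 0 → 0 ≤ hess g x X X)
    (u : EuclideanSpace ℝ (Fin n) → ℝ)
    (xb : EuclideanSpace ℝ (Fin n)) (hxb : g xb = 0)
    (U : Set (EuclideanSpace ℝ (Fin n))) (hU : IsOpen U) (hxbU : xb ∈ U)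
    (hu : ContDiffOn ℝ 2 u U)
    (hgradu : gradient u xb ≠ 0)
    (heig : ∀ x ∈ U, g x < 0 → plap p u x = -lam * spow (u x) (p-1))
    (hneum : ∀ x, g x = 0 → (inner ℝ (gradient u x) (gradient g x) : ℝ) = 0)
    (ψ : ℝ → ℝ) (hψ : ContDiff ℝ 1 ψ)
    (hmax : ∀ x ∈ Ω, ‖gradient u x‖ ^ p - ψ (u x) ≤ ‖gradient u xb‖ ^ p - ψ (u xb)) :
    gradient (fun x => ‖gradient u x‖ ^ p - ψ (u x)) xb = 0 :=
  stmt16_general p hp g hg Ω hΩ hreg hconv u xb hxb U hU hxbU hu hneum ψ hψ hmax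

end
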